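/- If x and y are B-snakes on a finite set I of cardinality r such that for every 1 ≤ i ≤ ⌊(r+1)/2⌋ the set F_i(x) equals F_i(y) or F_i(y*), then x ⊴ y in the partial order ⊴ on signed permutations. -/
import Mathlib


open scoped BigOperators

/-- `ent l i` is the entry `x_i` of the word `l = [x_r, …, x_1]` (1-indexed from the right),
and `0` out of range. -/
def ent (l : List ℤ) (i : ℕ) : ℤ :=
  if 1 ≤ i ∧ i ≤ l.length then l.getD (l.length - i) 0 else 0

/-- Build the word `[g r, g (r-1), …, g 1]`. -/
def build (r : ℕ) (g : ℕ → ℤ) : List ℤ :=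
  (List.range r).map (fun j => g (r - j))

/-- A signed permutation on `I`, written as the word `x_r ⋯ x_1`. -/
def IsSignedPerm (I : Finset ℕ) (l : List ℤ) : Prop :=
  l.length = I.card ∧ (∀ z ∈ l, z.natAbs ∈ I) ∧ (l.map Int.natAbs).Nodup

/-- A `B`-snake on `I`: a signed permutation with `0 < x_r > x_{r-1} < x_{r-2} > ⋯ x_1`. -/
def IsBSnake (I : Finset ℕ) (l : List ℤ) : Prop :=
  IsSignedPerm I l ∧ (0 < l.length → 0 < ent l l.length) ∧
  ∀ k, 1 ≤ k → k + 1 ≤ l.length →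
    if (l.length - k) % 2 = 1 then ent l k < ent l (k + 1)
    else ent l (k + 1) < ent l k

/-- Restrictability of a word on `I1 ∪ I2` to the pair `(I1, I2)`. -/
def Restrictable (I1 I2 : Finset ℕ) (l : List ℤ) : Prop :=
  ∀ i, 1 ≤ i → i ≤ (l.length - 1) / 2 →
    ({(ent l (2*i-1)).natAbs, (ent l (2*i)).natAbs} : Finset ℕ) ⊆ I1 ∨
    ({(ent l (2*i-1)).natAbs, (ent l (2*i)).natAbs} : Finset ℕ) ⊆ I2

/-- `κ_{(I1,I2)}(z)`: the number of pairs `(z_{2i-1}, z_{2j-1})` with `|z_{2i-1}| ∈ I1`,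
`|z_{2j-1}| ∈ I2` and `⌊(ℓ+1)/2⌋ ≥ i > j ≥ 1`. -/
def kappa (I1 I2 : Finset ℕ) (l : List ℤ) : ℕ :=
  (((Finset.Icc 1 ((l.length + 1) / 2)) ×ˢ (Finset.Icc 1 ((l.length + 1) / 2))).filter
    (fun p => p.2 < p.1 ∧ (ent l (2*p.1-1)).natAbs ∈ I1 ∧ (ent l (2*p.2-1)).natAbs ∈ I2)).card

/-- The subpermutation `ρ_J`. -/
def rho (J : Finset ℕ) (l : List ℤ) : List ℤ :=
  l.filter (fun a => decide (a.natAbs ∈ J))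

/-- `P_J` relative to the ambient index set `I`. -/
def Psub (I J : Finset ℕ) (l : List ℤ) : List ℤ :=
  if (I.card + J.card) % 2 = 0 then rho J l else rho J (l.map (fun a => -a))

/-- The free `ℚ`-vector space on all words. -/
abbrev FreeV : Type := (List ℤ) →₀ ℚ

/-- The basis vector of a word. -/
noncomputable def sv (l : List ℤ) : FreeV := Finsupp.single l 1

def swapPair (x : List ℤ) (i : ℕ) : List ℤ :=
  build x.length (fun k =>
    if k = 2*i - 1 then ent x (2*i) else if k = 2*i then ent x (2*i-1) else ent x k)

/-- relation `ℋ₁`. -/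
noncomputable def H1 (x : List ℤ) (i : ℕ) : FreeV := sv x + sv (swapPair x i)

def arr4 (x : List ℤ) (i : ℕ) (p q s t : ℤ) : List ℤ :=
  build x.length (fun k =>
    if k = 2*i+2 then p else if k = 2*i+1 then q else if k = 2*i then s
    else if k = 2*i-1 then t else ent x k)

/-- relation `ℋ₂`. -/
noncomputable def H2 (x : List ℤ) (i : ℕ) : FreeV :=
  sv (arr4 x i (ent x (2*i+2)) (ent x (2*i+1)) (ent x (2*i)) (ent x (2*i-1)))
  - sv (arr4 x i (ent x (2*i+2)) (ent x (2*i)) (ent x (2*i+1)) (ent x (2*i-1)))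
  + sv (arr4 x i (ent x (2*i+1)) (ent x (2*i)) (ent x (2*i+2)) (ent x (2*i-1)))
  + sv (arr4 x i (ent x (2*i+2)) (ent x (2*i-1)) (ent x (2*i+1)) (ent x (2*i)))
  - sv (arr4 x i (ent x (2*i+1)) (ent x (2*i-1)) (ent x (2*i+2)) (ent x (2*i)))
  + sv (arr4 x i (ent x (2*i)) (ent x (2*i-1)) (ent x (2*i+2)) (ent x (2*i+1)))

/-- relation `ℋ₃` (for `|I|` odd). -/
noncomputable def H3 (x : List ℤ) : FreeV :=
  sv x + sv (build x.length (fun k => if k = x.length then -ent x k else ent x k))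

def top2 (x : List ℤ) (p q : ℤ) : List ℤ :=
  build x.length (fun k =>
    if k = x.length then p else if k = x.length - 1 then q else ent x k)

/-- relation `ℋ₄` (for `|I|` even). -/
noncomputable def H4 (x : List ℤ) : FreeV :=
  sv (top2 x (ent x x.length) (ent x (x.length - 1)))
  - sv (top2 x (ent x x.length) (-ent x (x.length - 1)))
  + sv (top2 x (ent x (x.length - 1)) (-ent x x.length))
  - sv (top2 x (-ent x (x.length - 1)) (-ent x x.length))

def top3 (x : List ℤ) (p q s : ℤ) : List ℤ :=
  build x.length (fun k =>
    if k = x.length then p else if k = x.length - 1 then q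
    else if k = x.length - 2 then s else ent x k)

/-- relation `ℋ₅` (for `|I|` odd, `|I| ≥ 3`). -/
noncomputable def H5 (x : List ℤ) : FreeV :=
  sv (top3 x (ent x x.length) (ent x (x.length-1)) (ent x (x.length-2)))
  - sv (top3 x (ent x x.length) (-ent x (x.length-1)) (ent x (x.length-2)))
  + sv (top3 x (ent x x.length) (-ent x (x.length-2)) (ent x (x.length-1)))
  - sv (top3 x (ent x x.length) (-ent x (x.length-2)) (-ent x (x.length-1)))
  - sv (top3 x (ent x (x.length-1)) (ent x x.length) (ent x (x.length-2)))
  + sv (top3 x (ent x (x.length-1)) (-ent x x.length) (ent x (x.length-2)))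
  - sv (top3 x (ent x (x.length-1)) (-ent x (x.length-2)) (ent x x.length))
  + sv (top3 x (ent x (x.length-1)) (-ent x (x.length-2)) (-ent x x.length))
  + sv (top3 x (ent x (x.length-2)) (ent x x.length) (ent x (x.length-1)))
  - sv (top3 x (ent x (x.length-2)) (-ent x x.length) (ent x (x.length-1)))
  + sv (top3 x (ent x (x.length-2)) (-ent x (x.length-1)) (ent x x.length))
  - sv (top3 x (ent x (x.length-2)) (-ent x (x.length-1)) (-ent x x.length))

/-- The relation subspace `M_I` spanned by `ℋ₁, …, ℋ₅`. -/
noncomputable def Mrel (I : Finset ℕ) : Submodule ℚ FreeV :=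
  Submodule.span ℚ
    ({v | ∃ x i, IsSignedPerm I x ∧ 1 ≤ i ∧ i ≤ I.card / 2 ∧ v = H1 x i} ∪
     {v | ∃ x i, IsSignedPerm I x ∧ 1 ≤ i ∧ i + 1 ≤ I.card / 2 ∧ v = H2 x i} ∪
     {v | ∃ x, IsSignedPerm I x ∧ I.card % 2 = 1 ∧ v = H3 x} ∪
     {v | ∃ x, IsSignedPerm I x ∧ I.card % 2 = 0 ∧ v = H4 x} ∪
     {v | ∃ x, IsSignedPerm I x ∧ I.card % 2 = 1 ∧ 3 ≤ I.card ∧ v = H5 x})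

/-- `ℚ⟨𝔖^B_I⟩`, the span of the signed permutations on `I`. -/
noncomputable def SP (I : Finset ℕ) : Submodule ℚ FreeV :=
  Submodule.span ℚ {v | ∃ x, IsSignedPerm I x ∧ v = sv x}

-- The expansion of (the class of) `x` in the basis of `B`-snakes modulo `M_I`;
-- `snakeCoeff I x α` is the coefficient `C^α_x`.
open scoped Classical in
noncomputable def snakeCoeff (I : Finset ℕ) (x : List ℤ) : FreeV :=
  if h : ∃! c : FreeV, ((c.support : Set (List ℤ)) ⊆ {y | IsBSnake I y}) ∧
      (sv x - c.sum fun y q => q • sv y) ∈ Mrel I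
  then h.choose else 0

/-- The cup product `α ⌣ β` for snakes `α` on `I1` and `β` on `I2`. -/
noncomputable def cup (I1 I2 : Finset ℕ) (α β : List ℤ) : FreeV :=
  if Disjoint I1 I2 ∧ (I1.card * I2.card) % 2 = 0 then
    ∑ᶠ z ∈ {z : List ℤ | IsBSnake (I1 ∪ I2) z ∧ Restrictable I1 I2 z},
      (((-1 : ℚ) ^ kappa I1 I2 z) * snakeCoeff I1 (Psub (I1 ∪ I2) I1 z) α
        * snakeCoeff I2 (Psub (I1 ∪ I2) I2 z) β) • sv z
  else 0

/-- The relation `≺` on words of the same length. -/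
def precRel (x y : List ℤ) : Prop :=
  ∃ i, 1 ≤ i ∧ i ≤ x.length / 2 ∧
    ent x (2*i-1) + ent x (2*i+1) < ent y (2*i-1) + ent y (2*i+1) ∧
    ∀ j, 1 ≤ j → j < i →
      ent x (2*j-1) + ent x (2*j+1) = ent y (2*j-1) + ent y (2*j+1)

/-- The relation `◁`. -/
def triRel (x y : List ℤ) : Prop :=
  if x.length % 2 = 1 then precRel x y
  else precRel (x.map (fun a => -a)) (y.map (fun a => -a))

/-- The relation `⊴`. -/
def tle (x y : List ℤ) : Prop := triRel x y ∨ x = y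

/-- `F_i(x)`. -/
def Fset (x : List ℤ) (i : ℕ) : Finset ℤ :=
  if x.length % 2 = 1 then (Finset.Icc 1 (2*i-1)).image (ent x)
  else (Finset.Icc 1 (2*i-1)).image (fun k => -ent x k)

/-- `x*`: swap the entries in each block of two, and negate the leading entry if the
length is odd. -/
def star (x : List ℤ) : List ℤ :=
  build x.length (fun k =>
    if x.length % 2 = 1 ∧ k = x.length then -ent x k
    else if k % 2 = 1 then ent x (k+1) else ent x (k-1))



section Stmt4Aux

lemma ent_eq_zero (l : List ℤ) (k : ℕ) (h : ¬(1 ≤ k ∧ k ≤ l.length)) : ent l k = 0 := by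
  simp [ent, h]

lemma ent_eq_getElem (l : List ℤ) (k : ℕ) (h1 : 1 ≤ k) (h2 : k ≤ l.length) :
    ent l k = l[l.length - k]'(by omega) := by
  rw [ent, if_pos ⟨h1, h2⟩, List.getD_eq_getElem?_getD, List.getElem?_eq_getElem (by omega)]
  rfl

lemma getElem_eq_ent (l : List ℤ) (n : ℕ) (h : n < l.length) :
    l[n] = ent l (l.length - n) := by
  rw [ent_eq_getElem l _ (by omega) (by omega)]
  congr 1; omega

lemma ent_map_neg (l : List ℤ) (k : ℕ) : ent (l.map (fun a => -a)) k = - ent l k := by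
  by_cases h : 1 ≤ k ∧ k ≤ l.length
  · rw [ent_eq_getElem _ k (by omega) (by simpa using h.2),
      ent_eq_getElem l k h.1 h.2]
    simp
  · rw [ent_eq_zero _ _ (by simpa using h), ent_eq_zero _ _ h]; simp

lemma build_length (r : ℕ) (g : ℕ → ℤ) : (build r g).length = r := by simp [build]

lemma ent_build (r : ℕ) (g : ℕ → ℤ) (k : ℕ) (h1 : 1 ≤ k) (h2 : k ≤ r) :
    ent (build r g) k = g k := by
  rw [ent_eq_getElem _ k (by omega) (by rw [build_length]; omega)]
  simp only [build]
  rw [List.getElem_map, List.getElem_range]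
  congr 1
  simp only [build, List.length_map, List.length_range]
  omega

lemma list_ext_ent (x y : List ℤ) (hl : x.length = y.length)
    (h : ∀ k, 1 ≤ k → k ≤ x.length → ent x k = ent y k) : x = y := by
  apply List.ext_getElem hl
  intro n h1 h2
  rw [getElem_eq_ent _ _ h1, getElem_eq_ent _ _ h2, ← hl]
  exact h _ (by omega) (by omega)

lemma natAbs_ent_inj (l : List ℤ) (hn : (l.map Int.natAbs).Nodup) (k m : ℕ)
    (hk1 : 1 ≤ k) (hk2 : k ≤ l.length) (hm1 : 1 ≤ m) (hm2 : m ≤ l.length)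
    (h : (ent l k).natAbs = (ent l m).natAbs) : k = m := by
  rw [ent_eq_getElem l k hk1 hk2, ent_eq_getElem l m hm1 hm2] at h
  have h2 : (l.map Int.natAbs)[l.length - k]'(by simp; omega)
      = (l.map Int.natAbs)[l.length - m]'(by simp; omega) := by
    simpa using h
  have h3 := (hn.getElem_inj_iff).mp h2
  omega

lemma ent_mem (l : List ℤ) (k : ℕ) (h1 : 1 ≤ k) (h2 : k ≤ l.length) : ent l k ∈ l := by
  rw [ent_eq_getElem l k h1 h2]; exact List.getElem_mem _

lemma perm_image (I : Finset ℕ) (l : List ℤ) (hl : l.length = I.card)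
    (hmem : ∀ z ∈ l, z.natAbs ∈ I) (hnd : (l.map Int.natAbs).Nodup) :
    (Finset.Icc 1 I.card).image (fun k => (ent l k).natAbs) = I := by
  apply Finset.eq_of_subset_of_card_le
  · intro a ha
    simp only [Finset.mem_image, Finset.mem_Icc] at ha
    obtain ⟨k, ⟨hk1, hk2⟩, he⟩ := ha
    rw [← he]
    exact hmem _ (ent_mem l k hk1 (by omega))
  · rw [Finset.card_image_of_injOn, Nat.card_Icc]
    · omega
    · intro a ha b hb hab
      simp only [Finset.mem_coe, Finset.mem_Icc] at ha hb
      exact natAbs_ent_inj l hnd a b ha.1 (by omega) hb.1 (by omega) hab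


lemma master (r : ℕ) (f g : ℕ → ℤ)
    (h0f : ∀ k, ¬(1 ≤ k ∧ k ≤ r) → f k = 0) (h0g : ∀ k, ¬(1 ≤ k ∧ k ≤ r) → g k = 0)
    (hinj : ∀ k m, 1 ≤ k → k ≤ r → 1 ≤ m → m ≤ r → f k = f m → k = m)
    (hsf : ∀ k, 1 ≤ k → k + 1 ≤ r → (k % 2 = 1 → f (k+1) < f k) ∧ (k % 2 = 0 → f k < f (k+1)))
    (hsg : ∀ k, 1 ≤ k → k + 1 ≤ r → (k % 2 = 1 → g (k+1) < g k) ∧ (k % 2 = 0 → g k < g (k+1)))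
    (hpf : r % 2 = 1 → 0 < f r) (hpg : r % 2 = 1 → 0 < g r)
    (hyp : ∀ i, 1 ≤ i → i ≤ (r+1)/2 →
      (Finset.Icc 1 (2*i-1)).image f = (Finset.Icc 1 (2*i-1)).image g ∨
      (Finset.Icc 1 (2*i-1)).image f = (Finset.Icc 1 (2*i-1)).image
        (fun k => if r % 2 = 1 ∧ k = r then -g r else if k % 2 = 1 then g (k+1) else g (k-1))) :
    (∀ k, 1 ≤ k → k ≤ 2*((r+1)/2) - 1 → f k = g k) ∨
    (∃ i, 1 ≤ i ∧ i ≤ r / 2 ∧ f (2*i-1) + f (2*i+1) < g (2*i-1) + g (2*i+1) ∧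
      ∀ j, 1 ≤ j → j < i → f (2*j-1) + f (2*j+1) = g (2*j-1) + g (2*j+1)) := by
  classical
  have allB : ∀ J, J ≤ (r+1)/2 →
      (∀ j, 1 ≤ j → j ≤ J →
        (Finset.Icc 1 (2*j-1)).image f = (Finset.Icc 1 (2*j-1)).image g) →
      ∀ k, 1 ≤ k → k ≤ 2*J-1 → f k = g k := by
    intro J
    induction J with
    | zero => intro _ _ k hk1 hk2; omega
    | succ n ih =>
      intro hJ hA k hk1 hk2
      rcases Nat.eq_zero_or_pos n with rfl | hn
      · have h1 : (Finset.Icc 1 1).image f = (Finset.Icc 1 1).image g := by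
          have := hA 1 le_rfl le_rfl
          norm_num at this
          simpa using this
        have hm : f 1 ∈ (Finset.Icc 1 1).image g := by
          rw [← h1]; exact Finset.mem_image_of_mem f (by simp)
        simp [Finset.Icc_self] at hm
        have hk : k = 1 := by omega
        rw [hk]; exact hm
      · have ihk : ∀ k, 1 ≤ k → k ≤ 2*n-1 → f k = g k :=
          ih (by omega) (fun j hj1 hj2 => hA j hj1 (by omega))
        have hr1 : 2*n+1 ≤ r := by omega
        have hAn : (Finset.Icc 1 (2*n+1)).image f = (Finset.Icc 1 (2*n+1)).image g := by
          have := hA (n+1) (by omega) le_rfl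
          have h21 : 2*(n+1)-1 = 2*n+1 := by omega
          rwa [h21] at this
        have get : ∀ m, m = 2*n ∨ m = 2*n+1 → ∃ k', (k' = 2*n ∨ k' = 2*n+1) ∧ f m = g k' := by
          intro m hm
          have hm' : f m ∈ (Finset.Icc 1 (2*n+1)).image g := by
            rw [← hAn]
            exact Finset.mem_image_of_mem f (by simp only [Finset.mem_Icc]; omega)
          obtain ⟨k', hk', hke⟩ := Finset.mem_image.mp hm'
          simp only [Finset.mem_Icc] at hk'
          by_cases hsmall : k' ≤ 2*n-1
          · exfalso
            have hfm : f m = f k' := by rw [← hke, ihk k' hk'.1 hsmall]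
            have := hinj m k' (by omega) (by omega) (by omega) (by omega) hfm
            omega
          · exact ⟨k', by omega, hke.symm⟩
        obtain ⟨k1, hk1c, he1⟩ := get (2*n+1) (Or.inr rfl)
        obtain ⟨k0, hk0c, he0⟩ := get (2*n) (Or.inl rfl)
        have hf : f (2*n) < f (2*n+1) := (hsf (2*n) (by omega) (by omega)).2 (by omega)
        have hg : g (2*n) < g (2*n+1) := (hsg (2*n) (by omega) (by omega)).2 (by omega)
        have key : f (2*n+1) = g (2*n+1) ∧ f (2*n) = g (2*n) := by
          rcases hk1c with h1c | h1c <;> subst h1c <;>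
            rcases hk0c with h0c | h0c <;> subst h0c <;>
            first
            | exact ⟨he1, he0⟩
            | omega
        rcases (by omega : k ≤ 2*n-1 ∨ k = 2*n ∨ k = 2*n+1) with h|h|h
        · exact ihk k hk1 h
        · rw [h]; exact key.2
        · rw [h]; exact key.1
  by_cases hall : ∀ i, 1 ≤ i → i ≤ (r+1)/2 →
      (Finset.Icc 1 (2*i-1)).image f = (Finset.Icc 1 (2*i-1)).image g
  · exact Or.inl (allB ((r+1)/2) le_rfl (fun j h1 h2 => hall j h1 h2))
  · push_neg at hall
    obtain ⟨i', hi'1, hi'2, hi'3⟩ := hall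
    have hPex : ∃ i, 1 ≤ i ∧ i ≤ (r+1)/2 ∧
        (Finset.Icc 1 (2*i-1)).image f ≠ (Finset.Icc 1 (2*i-1)).image g :=
      ⟨i', hi'1, hi'2, hi'3⟩
    obtain ⟨i₀, hspec, hmin⟩ : ∃ i, (1 ≤ i ∧ i ≤ (r+1)/2 ∧
        (Finset.Icc 1 (2*i-1)).image f ≠ (Finset.Icc 1 (2*i-1)).image g) ∧
        ∀ j, j < i → ¬(1 ≤ j ∧ j ≤ (r+1)/2 ∧
          (Finset.Icc 1 (2*j-1)).image f ≠ (Finset.Icc 1 (2*j-1)).image g) :=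
      ⟨Nat.find hPex, Nat.find_spec hPex, fun j hj => Nat.find_min hPex hj⟩
    have hBj : ∀ j, 1 ≤ j → j < i₀ →
        (Finset.Icc 1 (2*j-1)).image f = (Finset.Icc 1 (2*j-1)).image g := by
      intro j h1 h2
      by_contra hne
      exact hmin j h2 ⟨h1, by omega, hne⟩
    have hstar : (Finset.Icc 1 (2*i₀-1)).image f = (Finset.Icc 1 (2*i₀-1)).image
        (fun k => if r % 2 = 1 ∧ k = r then -g r else if k % 2 = 1 then g (k+1) else g (k-1)) :=
      (hyp i₀ hspec.1 hspec.2.1).resolve_left hspec.2.2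
    have hrge : 2*i₀ - 1 ≤ r := by
      have := hspec.2.1; omega
    rcases (by omega : i₀ = 1 ∨ 2 ≤ i₀) with h1 | h2
    · -- first switch at i₀ = 1
      subst h1
      norm_num at hstar
      have hrpos : 1 ≤ r := by have := hspec.2.1; omega
      rcases (by omega : r = 1 ∨ 2 ≤ r) with hr1 | hr2
      · exfalso
        subst hr1
        rw [if_pos (show (1:ℕ) % 2 = 1 ∧ 1 = 1 by norm_num)] at hstar
        have h1 := hpf (by norm_num)
        have h2 := hpg (by norm_num)
        omega
      · rw [if_neg (by rintro ⟨_, h⟩; omega)] at hstar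
        have hg12 : g 2 < g 1 := (hsg 1 (by omega) (by omega)).1 (by norm_num)
        refine Or.inr ⟨1, le_rfl, by omega, ?_, by intro j hj1 hj2; omega⟩
        have e1 : 2*1-1 = 1 := by norm_num
        have e3 : 2*1+1 = 3 := by norm_num
        rw [e1, e3]
        rcases (by omega : r = 2 ∨ 3 ≤ r) with hr2' | hr3
        · have hf3 : f 3 = 0 := h0f 3 (by omega)
          have hg3 : g 3 = 0 := h0g 3 (by omega)
          omega
        · have hg23 : g 2 < g 3 := (hsg 2 (by omega) (by omega)).2 (by norm_num)
          have hm3 : f 3 ∈ (Finset.Icc 1 (2*2-1)).image f :=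
            Finset.mem_image_of_mem f (by simp only [Finset.mem_Icc]; omega)
          rcases hyp 2 (by omega) (by omega) with hb | hbs
          · rw [hb] at hm3
            obtain ⟨k', hk', hke⟩ := Finset.mem_image.mp hm3
            simp only [Finset.mem_Icc] at hk'
            obtain ⟨hka, hkb⟩ := hk'
            have hkb' : k' ≤ 3 := by omega
            interval_cases k'
            · omega
            · exfalso
              have hq : f 3 = f 1 := by omega
              have := hinj 3 1 (by omega) (by omega) (by omega) (by omega) hq
              omega
            · omega
          · rw [hbs] at hm3
            obtain ⟨k', hk', hke0⟩ := Finset.mem_image.mp hm3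
            simp only [Finset.mem_Icc] at hk'
            obtain ⟨hka, hkb⟩ := hk'
            have hke : (if r % 2 = 1 ∧ k' = r then -g r
                else if k' % 2 = 1 then g (k'+1) else g (k'-1)) = f 3 := hke0
            have hkb' : k' ≤ 3 := by omega
            interval_cases k'
            · exfalso
              rw [if_neg (by rintro ⟨_, h⟩; omega)] at hke
              norm_num at hke
              have hq : f 3 = f 1 := by omega
              have := hinj 3 1 (by omega) (by omega) (by omega) (by omega) hq
              omega
            · rw [if_neg (by rintro ⟨hp, h⟩; omega), if_neg (by norm_num)] at hke
              norm_num at hke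
              omega
            · by_cases htop : r % 2 = 1 ∧ 3 = r
              · rw [if_pos htop] at hke
                have hgr := hpg htop.1
                rw [← htop.2] at hgr
                omega
              · rw [if_neg htop] at hke
                norm_num at hke
                have hr4 : 4 ≤ r := by
                  rcases (by omega : r = 3 ∨ 4 ≤ r) with h|h
                  · exact absurd ⟨by omega, by omega⟩ htop
                  · exact h
                have hg34 : g 4 < g 3 := (hsg 3 (by omega) (by omega)).1 (by norm_num)
                omega
    · -- first switch at i₀ = t + 2
      obtain ⟨t, rfl⟩ : ∃ t, i₀ = t+2 := ⟨i₀-2, by omega⟩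
      have haveq : ∀ k, 1 ≤ k → k ≤ 2*(t+1)-1 → f k = g k :=
        allB (t+1) (by omega) (fun j hj1 hj2 => hBj j hj1 (by omega))
      have hb23 : 2*t+3 ≤ r := by omega
      have h23 : 2*(t+2)-1 = 2*t+3 := by omega
      rw [h23] at hstar
      have hm : f (2*t+3) ∈ (Finset.Icc 1 (2*t+3)).image
          (fun k => if r % 2 = 1 ∧ k = r then -g r
            else if k % 2 = 1 then g (k+1) else g (k-1)) := by
        rw [← hstar]
        exact Finset.mem_image_of_mem f (by simp only [Finset.mem_Icc]; omega)
      obtain ⟨k', hk', hke0⟩ := Finset.mem_image.mp hm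
      simp only [Finset.mem_Icc] at hk'
      have hke : (if r % 2 = 1 ∧ k' = r then -g r
          else if k' % 2 = 1 then g (k'+1) else g (k'-1)) = f (2*t+3) := hke0
      have hlt : f (2*t+3) < g (2*t+3) := by
        rcases (by omega : (k' ≤ 2*t ∧ k' % 2 = 1) ∨ (k' ≤ 2*t+2 ∧ k' % 2 = 0) ∨
            k' = 2*t+1 ∨ k' = 2*t+3) with ⟨hks, hko⟩ | ⟨hks, hko⟩ | hkm | hktop
        · exfalso
          rw [if_neg (by rintro ⟨_, h⟩; omega), if_pos hko] at hke
          have hq : f (2*t+3) = f (k'+1) := by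
            rw [← hke, haveq (k'+1) (by omega) (by omega)]
          have := hinj (2*t+3) (k'+1) (by omega) (by omega) (by omega) (by omega) hq
          omega
        · exfalso
          rw [if_neg (by rintro ⟨hp, h⟩; omega), if_neg (by omega)] at hke
          have hq : f (2*t+3) = f (k'-1) := by
            rw [← hke, haveq (k'-1) (by omega) (by omega)]
          have := hinj (2*t+3) (k'-1) (by omega) (by omega) (by omega) (by omega) hq
          omega
        · subst hkm
          rw [if_neg (by rintro ⟨_, h⟩; omega), if_pos (by omega)] at hke
          have hg' : g (2*t+1+1) < g (2*t+3) := (hsg (2*t+2) (by omega) (by omega)).2 (by omega)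
          omega
        · subst hktop
          by_cases htop : r % 2 = 1 ∧ 2*t+3 = r
          · rw [if_pos htop] at hke
            have hgr := hpg htop.1
            rw [← htop.2] at hgr
            omega
          · rw [if_neg htop, if_pos (by omega)] at hke
            have hrr : 2*t+4 ≤ r := by
              rcases (by omega : r = 2*t+3 ∨ 2*t+4 ≤ r) with h|h
              · exact absurd ⟨by omega, by omega⟩ htop
              · exact h
            have hg' : g (2*t+3+1) < g (2*t+3) := (hsg (2*t+3) (by omega) (by omega)).1 (by omega)
            omega
      refine Or.inr ⟨t+1, by omega, by omega, ?_, ?_⟩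
      · have e1 : 2*(t+1)-1 = 2*t+1 := by omega
        have e3 : 2*(t+1)+1 = 2*t+3 := by omega
        rw [e1, e3]
        have := haveq (2*t+1) (by omega) (by omega)
        omega
      · intro j hj1 hj2
        rw [haveq (2*j-1) (by omega) (by omega), haveq (2*j+1) (by omega) (by omega)]

end Stmt4Aux

/-- if `x, y` are `B`-snakes on `I` such that for each
`1 ≤ i ≤ ⌊(r+1)/2⌋` the set `F_i(x)` is `F_i(y)` or `F_i(y*)`, then `x ⊴ y`. -/
theorem stmt4 (I : Finset ℕ) (hI : ∀ i ∈ I, 0 < i) (x y : List ℤ)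
    (hx : IsBSnake I x) (hy : IsBSnake I y)
    (h : ∀ i, 1 ≤ i → i ≤ (I.card + 1) / 2 →
      Fset x i = Fset y i ∨ Fset x i = Fset (star y) i) :
    tle x y := by
  obtain ⟨⟨hxl, hxmem, hxnd⟩, hxpos, hxsn⟩ := hx
  obtain ⟨⟨hyl, hymem, hynd⟩, hypos, hysn⟩ := hy
  set r := I.card with hrdef
  have hsnx : ∀ k, 1 ≤ k → k + 1 ≤ x.length →
      ((x.length - k) % 2 = 1 → ent x k < ent x (k+1)) ∧
      ((x.length - k) % 2 ≠ 1 → ent x (k+1) < ent x k) := by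
    intro k h1 h2
    have hh := hxsn k h1 h2
    constructor <;> intro hp
    · rwa [if_pos hp] at hh
    · rwa [if_neg hp] at hh
  have hsny : ∀ k, 1 ≤ k → k + 1 ≤ y.length →
      ((y.length - k) % 2 = 1 → ent y k < ent y (k+1)) ∧
      ((y.length - k) % 2 ≠ 1 → ent y (k+1) < ent y k) := by
    intro k h1 h2
    have hh := hysn k h1 h2
    constructor <;> intro hp
    · rwa [if_pos hp] at hh
    · rwa [if_neg hp] at hh
  have hstarlen : (star y).length = y.length := build_length _ _
  by_cases hro : r % 2 = 1
  · -- odd case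
    have h0f : ∀ k, ¬(1 ≤ k ∧ k ≤ r) → ent x k = 0 :=
      fun k hk => ent_eq_zero x k (by omega)
    have h0g : ∀ k, ¬(1 ≤ k ∧ k ≤ r) → ent y k = 0 :=
      fun k hk => ent_eq_zero y k (by omega)
    have hinj : ∀ k m, 1 ≤ k → k ≤ r → 1 ≤ m → m ≤ r → ent x k = ent x m → k = m :=
      fun k m hk1 hk2 hm1 hm2 he =>
        natAbs_ent_inj x hxnd k m hk1 (by omega) hm1 (by omega) (by rw [he])
    have hsf : ∀ k, 1 ≤ k → k + 1 ≤ r →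
        (k % 2 = 1 → ent x (k+1) < ent x k) ∧ (k % 2 = 0 → ent x k < ent x (k+1)) := by
      intro k h1 h2
      have hs := hsnx k h1 (by omega)
      exact ⟨fun hp => hs.2 (by omega), fun hp => hs.1 (by omega)⟩
    have hsg : ∀ k, 1 ≤ k → k + 1 ≤ r →
        (k % 2 = 1 → ent y (k+1) < ent y k) ∧ (k % 2 = 0 → ent y k < ent y (k+1)) := by
      intro k h1 h2
      have hs := hsny k h1 (by omega)
      exact ⟨fun hp => hs.2 (by omega), fun hp => hs.1 (by omega)⟩
    have hpf : r % 2 = 1 → 0 < ent x r := by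
      intro _
      have := hxpos (by omega)
      rwa [hxl] at this
    have hpg : r % 2 = 1 → 0 < ent y r := by
      intro _
      have := hypos (by omega)
      rwa [hyl] at this
    have hyp : ∀ i, 1 ≤ i → i ≤ (r+1)/2 →
        (Finset.Icc 1 (2*i-1)).image (ent x) = (Finset.Icc 1 (2*i-1)).image (ent y) ∨
        (Finset.Icc 1 (2*i-1)).image (ent x) = (Finset.Icc 1 (2*i-1)).image
          (fun k => if r % 2 = 1 ∧ k = r then -(ent y r)
            else if k % 2 = 1 then ent y (k+1) else ent y (k-1)) := by
      intro i h1 h2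
      have hx' : Fset x i = (Finset.Icc 1 (2*i-1)).image (ent x) := by
        rw [Fset, if_pos (by rw [hxl]; exact hro)]
      have hy' : Fset y i = (Finset.Icc 1 (2*i-1)).image (ent y) := by
        rw [Fset, if_pos (by rw [hyl]; exact hro)]
      have hs' : Fset (star y) i = (Finset.Icc 1 (2*i-1)).image
          (fun k => if r % 2 = 1 ∧ k = r then -(ent y r)
            else if k % 2 = 1 then ent y (k+1) else ent y (k-1)) := by
        rw [Fset, if_pos (by rw [hstarlen, hyl]; exact hro)]
        apply Finset.image_congr
        intro k hk
        simp only [Finset.mem_coe, Finset.mem_Icc] at hk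
        rw [show _root_.star y = build y.length (fun k =>
            if y.length % 2 = 1 ∧ k = y.length then -ent y k
            else if k % 2 = 1 then ent y (k+1) else ent y (k-1)) from rfl,
          ent_build _ _ k hk.1 (by rw [hyl]; omega)]
        simp only []
        rw [hyl]
        by_cases hc : r % 2 = 1 ∧ k = r
        · rw [if_pos hc, if_pos hc, hc.2]
        · rw [if_neg hc, if_neg hc]
      rcases h i h1 h2 with hc | hc
      · left; rw [← hx', ← hy', hc]
      · right; rw [← hx', ← hs', hc]
    rcases master r (ent x) (ent y) h0f h0g hinj hsf hsg hpf hpg hyp with hc | hc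
    · right
      apply list_ext_ent x y (by omega)
      intro k h1 h2
      exact hc k h1 (by omega)
    · left
      unfold triRel
      rw [if_pos (by rw [hxl]; exact hro)]
      obtain ⟨i, h1, h2, h3, h4⟩ := hc
      exact ⟨i, h1, by omega, h3, h4⟩
  · -- even case
    have h0f : ∀ k, ¬(1 ≤ k ∧ k ≤ r) → -ent x k = 0 := by
      intro k hk
      rw [ent_eq_zero x k (by omega)]; ring
    have h0g : ∀ k, ¬(1 ≤ k ∧ k ≤ r) → -ent y k = 0 := by
      intro k hk
      rw [ent_eq_zero y k (by omega)]; ring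
    have hinj : ∀ k m, 1 ≤ k → k ≤ r → 1 ≤ m → m ≤ r → -ent x k = -ent x m → k = m := by
      intro k m hk1 hk2 hm1 hm2 he
      exact natAbs_ent_inj x hxnd k m hk1 (by omega) hm1 (by omega)
        (by rw [show ent x k = ent x m by omega])
    have hsf : ∀ k, 1 ≤ k → k + 1 ≤ r →
        (k % 2 = 1 → -ent x (k+1) < -ent x k) ∧ (k % 2 = 0 → -ent x k < -ent x (k+1)) := by
      intro k h1 h2
      have hs := hsnx k h1 (by omega)
      constructor <;> intro hp
      · have := hs.1 (by omega)
        omega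
      · have := hs.2 (by omega)
        omega
    have hsg : ∀ k, 1 ≤ k → k + 1 ≤ r →
        (k % 2 = 1 → -ent y (k+1) < -ent y k) ∧ (k % 2 = 0 → -ent y k < -ent y (k+1)) := by
      intro k h1 h2
      have hs := hsny k h1 (by omega)
      constructor <;> intro hp
      · have := hs.1 (by omega)
        omega
      · have := hs.2 (by omega)
        omega
    have hpf : r % 2 = 1 → 0 < -ent x r := by intro hp; omega
    have hpg : r % 2 = 1 → 0 < -ent y r := by intro hp; omega
    have hyp : ∀ i, 1 ≤ i → i ≤ (r+1)/2 →
        (Finset.Icc 1 (2*i-1)).image (fun k => -ent x k)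
          = (Finset.Icc 1 (2*i-1)).image (fun k => -ent y k) ∨
        (Finset.Icc 1 (2*i-1)).image (fun k => -ent x k) = (Finset.Icc 1 (2*i-1)).image
          (fun k => if r % 2 = 1 ∧ k = r then -(-ent y r)
            else if k % 2 = 1 then -ent y (k+1) else -ent y (k-1)) := by
      intro i h1 h2
      have hx' : Fset x i = (Finset.Icc 1 (2*i-1)).image (fun k => -ent x k) := by
        rw [Fset, if_neg (by rw [hxl]; exact hro)]
      have hy' : Fset y i = (Finset.Icc 1 (2*i-1)).image (fun k => -ent y k) := by
        rw [Fset, if_neg (by rw [hyl]; exact hro)]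
      have hs' : Fset (star y) i = (Finset.Icc 1 (2*i-1)).image
          (fun k => if r % 2 = 1 ∧ k = r then -(-ent y r)
            else if k % 2 = 1 then -ent y (k+1) else -ent y (k-1)) := by
        rw [Fset, if_neg (by rw [hstarlen, hyl]; exact hro)]
        apply Finset.image_congr
        intro k hk
        simp only [Finset.mem_coe, Finset.mem_Icc] at hk
        show -ent (_root_.star y) k = _
        rw [show _root_.star y = build y.length (fun k =>
            if y.length % 2 = 1 ∧ k = y.length then -ent y k
            else if k % 2 = 1 then ent y (k+1) else ent y (k-1)) from rfl,
          ent_build _ _ k hk.1 (by rw [hyl]; omega)]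
        simp only []
        rw [hyl]
        have hcr : ¬(r % 2 = 1 ∧ k = r) := fun hcon => hro hcon.1
        rw [if_neg hcr, if_neg hcr]
        by_cases hc : k % 2 = 1
        · rw [if_pos hc, if_pos hc]
        · rw [if_neg hc, if_neg hc]
      rcases h i h1 h2 with hc | hc
      · left; rw [← hx', ← hy', hc]
      · right; rw [← hx', ← hs', hc]
    rcases master r (fun k => -ent x k) (fun k => -ent y k)
        h0f h0g hinj hsf hsg hpf hpg hyp with hc | hc
    · right
      have heq : ∀ k, 1 ≤ k → k ≤ r - 1 → ent x k = ent y k := by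
        intro k h1 h2
        have := hc k h1 (by omega)
        omega
      rcases Nat.eq_zero_or_pos r with hr0 | hrpos
      · have hx0 : x = [] := List.eq_nil_of_length_eq_zero (by omega)
        have hy0 : y = [] := List.eq_nil_of_length_eq_zero (by omega)
        rw [hx0, hy0]
      · have hr2 : 2 ≤ r := by omega
        have hIx := perm_image I x hxl hxmem hxnd
        have hIy := perm_image I y hyl hymem hynd
        rw [← hrdef] at hIx hIy
        have hsmall : (Finset.Icc 1 (r-1)).image (fun k => (ent x k).natAbs)
            = (Finset.Icc 1 (r-1)).image (fun k => (ent y k).natAbs) := by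
          apply Finset.image_congr
          intro k hk
          simp only [Finset.mem_coe, Finset.mem_Icc] at hk
          show (ent x k).natAbs = (ent y k).natAbs
          rw [heq k hk.1 hk.2]
        have hsub : (Finset.Icc 1 (r-1)).image (fun k => (ent x k).natAbs) ⊆ I := by
          rw [← hIx]
          exact Finset.image_subset_image (Finset.Icc_subset_Icc_right (by omega))
        have hcardsmall : ((Finset.Icc 1 (r-1)).image (fun k => (ent x k).natAbs)).card
            = r - 1 := by
          rw [Finset.card_image_of_injOn, Nat.card_Icc]
          · omega
          · intro a ha b hb hab
            simp only [Finset.mem_coe, Finset.mem_Icc] at ha hb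
            exact natAbs_ent_inj x hxnd a b ha.1 (by omega) hb.1 (by omega) hab
        have hdiffcard : (I \ (Finset.Icc 1 (r-1)).image (fun k => (ent x k).natAbs)).card
            ≤ 1 := by
          rw [Finset.card_sdiff_of_subset hsub, hcardsmall]
          omega
        have hmx : (ent x r).natAbs ∈
            I \ (Finset.Icc 1 (r-1)).image (fun k => (ent x k).natAbs) := by
          rw [Finset.mem_sdiff]
          constructor
          · rw [← hIx]
            exact Finset.mem_image_of_mem _ (by simp only [Finset.mem_Icc]; omega)
          · intro hmem
            simp only [Finset.mem_image, Finset.mem_Icc] at hmem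
            obtain ⟨k, ⟨hk1, hk2⟩, hke⟩ := hmem
            have := natAbs_ent_inj x hxnd k r hk1 (by omega) (by omega) (by omega) hke
            omega
        have hmy : (ent y r).natAbs ∈
            I \ (Finset.Icc 1 (r-1)).image (fun k => (ent x k).natAbs) := by
          rw [Finset.mem_sdiff, hsmall]
          constructor
          · rw [← hIy]
            exact Finset.mem_image_of_mem _ (by simp only [Finset.mem_Icc]; omega)
          · intro hmem
            simp only [Finset.mem_image, Finset.mem_Icc] at hmem
            obtain ⟨k, ⟨hk1, hk2⟩, hke⟩ := hmem
            have := natAbs_ent_inj y hynd k r hk1 (by omega) (by omega) (by omega) hke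
            omega
        have habs : (ent x r).natAbs = (ent y r).natAbs :=
          Finset.card_le_one.mp hdiffcard _ hmx _ hmy
        have hxr : 0 < ent x r := by
          have := hxpos (by omega)
          rwa [hxl] at this
        have hyr : 0 < ent y r := by
          have := hypos (by omega)
          rwa [hyl] at this
        have htop : ent x r = ent y r := by omega
        apply list_ext_ent x y (by omega)
        intro k h1 h2
        rcases (by omega : k ≤ r - 1 ∨ k = r) with hk | hk
        · exact heq k h1 hk
        · rw [hk, htop]
    · left
      unfold triRel
      rw [if_neg (by rw [hxl]; exact hro)]
      unfold precRel
      simp only [ent_map_neg, List.length_map, hxl]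
      exact hc
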